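/- arXiv:1510.06696 — 2 statements merged into one kernel-verified Lean document; each statement's English description precedes it below -/
import Mathlib

section
/- Let p be a prime with p ≡ 1 (mod q), and let n > q with base-p digit sum α_p(n) ≤ q. Then p divides C(n, qk) for every k with 0 < qk < n. -/
/-!
By Kummer's theorem, `p ∤ C(n, m)` means there are no carries when adding `m` and `n - m` in
base `p`, so `s(m) + s(n - m) = s(n) ≤ q`, where `s` is the base-`p` digit sum. Since `p ≡ 1`
(mod `q`), every number is congruent to its digit sum mod `q`; hence for `m = qk > 0` the digit
sum `s(m)` is a positive multiple of `q`, and `s(n - m) > 0` pushes the total above `q`.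
-/

namespace Nat

theorem digits_sum_pos (b : ℕ) {m : ℕ} (hm : m ≠ 0) : 0 < (b.digits m).sum :=
  (Nat.pos_of_ne_zero (getLast_digit_ne_zero b hm)).trans_le
    (List.le_sum_of_mem (List.getLast_mem _))

theorem modEq_digits_sum_of_modEq {b q : ℕ} (hb : b ≡ 1 [MOD q]) (m : ℕ) :
    m ≡ (b.digits m).sum [MOD q] := by
  simpa only [ofDigits_digits, ofDigits_one] using ofDigits_modEq' b 1 q hb (b.digits m)

theorem le_digits_sum_of_dvd {b q m : ℕ} (hb : b ≡ 1 [MOD q]) (hqm : q ∣ m) (hm : m ≠ 0) :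
    q ≤ (b.digits m).sum :=
  le_of_dvd (digits_sum_pos b hm) ((modEq_digits_sum_of_modEq hb m).dvd_iff dvd_rfl |>.mp hqm)

theorem digits_sum_add_le_of_not_dvd_choose {p m n : ℕ} [Fact p.Prime] (hmn : m ≤ n)
    (h : ¬p ∣ n.choose m) : (p.digits m).sum + (p.digits (n - m)).sum ≤ (p.digits n).sum := by
  have hkummer := sub_one_mul_padicValNat_choose_eq_sub_sum_digits (p := p) hmn
  rw [padicValNat.eq_zero_of_not_dvd h, mul_zero] at hkummer
  omega

end Nat

theorem stmt_12_general (n q p : ℕ) (hp : p.Prime)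
    (hcong : p % q = 1 % q) (hα : (Nat.digits p n).sum ≤ q) :
    ∀ k : ℕ, 0 < q * k → q * k < n → p ∣ Nat.choose n (q * k) := by
  intro k hk hkn
  by_contra h
  have := Fact.mk hp
  have hsum := Nat.digits_sum_add_le_of_not_dvd_choose hkn.le h
  have hm := Nat.le_digits_sum_of_dvd hcong (dvd_mul_right q k) hk.ne'
  have hrest := Nat.digits_sum_pos p (Nat.sub_ne_zero_of_lt hkn)
  omega

theorem stmt_12 (n q p : ℕ) (hq : 0 < q) (hn : q < n) (hp : p.Prime)
    (hcong : p % q = 1 % q) (hα : (Nat.digits p n).sum ≤ q) :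
    ∀ k : ℕ, 0 < q * k → q * k < n → p ∣ Nat.choose n (q * k) :=
  stmt_12_general n q p hp hcong hα
end

section
/- Let p be a prime with p ≡ 1 (mod q), and let n > q with α_p(n) ≤ q. Let p^m be the largest power of p appearing in the minimal representation of n as a sum of powers of p (so m ≥ 1). Then the p-adic valuation of C(n, (p-1)p^{m-1}) equals exactly 1, and q divides (p-1)p^{m-1}. -/
/-!
Write `k = (p - 1) * p ^ (m - 1)`. Subtracting `k` from `n` in base `p` raises the digit of `n`
at position `m - 1` by one and lowers the leading digit (at position `m`) by one. Since these two
digits of `n` sum to at most `α_p(n) ≤ q ≤ p - 1` and the leading one is positive, neither step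
wraps around, so `α_p(n - k) = α_p(n)`. Kummer's theorem
`(p - 1) v_p(C(n, k)) = α_p(k) + α_p(n - k) - α_p(n)` then gives `(p - 1) v_p(C(n, k)) = p - 1`.
-/

namespace Nat

variable {b : ℕ}

theorem digits_sum_of_lt {x : ℕ} (hx : x < b) : (b.digits x).sum = x := by
  rcases eq_or_ne x 0 with rfl | hx0
  · simp
  · simp [digits_of_lt b x hx0 hx]

theorem digits_sum_add_base_pow_mul (hb : 1 < b) {x e : ℕ} (hx : x < b ^ e) (c : ℕ) :
    (b.digits (x + b ^ e * c)).sum = (b.digits x).sum + (b.digits c).sum := by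
  rcases eq_or_ne c 0 with rfl | hc
  · simp
  obtain ⟨k, rfl⟩ := Nat.exists_eq_add_of_le ((digits_length_le_iff hb x).2 hx)
  rw [← digits_append_zeroes_append_digits hb (Nat.pos_of_ne_zero hc)]
  simp

theorem digits_sum_add_base_mul (hb : 1 < b) {x : ℕ} (hx : x < b) (w : ℕ) :
    (b.digits (x + b * w)).sum = x + (b.digits w).sum := by
  have := digits_sum_add_base_pow_mul hb (x := x) (e := 1) (by simpa) w
  rwa [pow_one, digits_sum_of_lt hx] at this

theorem digits_sum_eq_mod_add_digits_sum_div (hb : 1 < b) (n : ℕ) :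
    (b.digits n).sum = n % b + (b.digits (n / b)).sum := by
  conv_lhs => rw [← Nat.mod_add_div n b]
  exact digits_sum_add_base_mul hb (Nat.mod_lt n (by omega)) _

theorem digits_sum_eq_mod_pow_add_div_pow (hb : 1 < b) (n e : ℕ) :
    (b.digits n).sum = (b.digits (n % b ^ e)).sum + (b.digits (n / b ^ e)).sum := by
  conv_lhs => rw [← Nat.mod_add_div n (b ^ e)]
  exact digits_sum_add_base_pow_mul hb (Nat.mod_lt n (by positivity)) _

theorem div_pow_mod_add_div_pow_succ_mod_le_digits_sum (hb : 1 < b) (n e : ℕ) :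
    n / b ^ e % b + n / b ^ (e + 1) % b ≤ (b.digits n).sum := by
  have hdiv : n / b ^ (e + 1) = n / b ^ e / b := by rw [pow_succ, Nat.div_div_eq_div_mul]
  rw [digits_sum_eq_mod_pow_add_div_pow hb n e,
    digits_sum_eq_mod_add_digits_sum_div hb (n / b ^ e),
    digits_sum_eq_mod_add_digits_sum_div hb (n / b ^ e / b), hdiv]
  omega

/- `y - (b - 1) = y + 1 - b`: the last digit goes up by one and, with no further borrow,
the next one goes down by one. -/
theorem digits_sum_sub_base_sub_one {y : ℕ} (hb : 1 < b) (h₀ : y % b + 1 < b)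
    (h₁ : y / b % b ≠ 0) : (b.digits (y - (b - 1))).sum = (b.digits y).sum := by
  obtain ⟨c, hc⟩ : ∃ c, y / b = c := ⟨_, rfl⟩
  rw [hc] at h₁
  have hy : y % b + b * c = y := hc ▸ Nat.mod_add_div y b
  have hcc : c % b + b * (c / b) = c := Nat.mod_add_div c b
  have hc_pred : c - 1 = (c % b - 1) + b * (c / b) := by omega
  have hy_sub : y - (b - 1) = (y % b + 1) + b * (c - 1) := by
    rw [Nat.mul_sub_one]
    have : b ≤ b * c := Nat.le_mul_of_pos_right b (by omega)
    omega
  rw [hy_sub, digits_sum_add_base_mul hb h₀, hc_pred,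
    digits_sum_add_base_mul hb ((Nat.sub_le _ _).trans_lt (Nat.mod_lt c (by omega))),
    digits_sum_eq_mod_add_digits_sum_div hb y, hc, digits_sum_eq_mod_add_digits_sum_div hb c]
  omega

end Nat

open Nat in
theorem padicValNat_choose_sub_one_mul_pow_eq_one {p n e : ℕ} [hp : Fact p.Prime]
    (h₀ : n / p ^ e % p + 1 < p) (h₁ : n / p ^ (e + 1) % p ≠ 0) :
    padicValNat p (n.choose ((p - 1) * p ^ e)) = 1 := by
  have hp1 := hp.out.one_lt
  obtain ⟨y, hy⟩ : ∃ y, n / p ^ e = y := ⟨_, rfl⟩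
  have hdiv : n / p ^ (e + 1) = y / p := by rw [pow_succ, ← Nat.div_div_eq_div_mul, hy]
  rw [hy] at h₀
  rw [hdiv] at h₁
  have hn : n % p ^ e + p ^ e * y = n := hy ▸ Nat.mod_add_div n (p ^ e)
  have hyp : p ≤ y := by
    by_contra! h
    simp [Nat.div_eq_of_lt h] at h₁
  have hkn : (p - 1) * p ^ e ≤ n :=
    calc (p - 1) * p ^ e ≤ y * p ^ e := Nat.mul_le_mul_right _ (by omega)
      _ ≤ n := hy ▸ Nat.div_mul_le_self n (p ^ e)
  have hsub : n - (p - 1) * p ^ e = n % p ^ e + p ^ e * (y - (p - 1)) := by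
    rw [Nat.mul_sub, mul_comm (p - 1),
      ← Nat.add_sub_assoc (Nat.mul_le_mul_left _ (by omega)), hn]
  have hk : (p.digits ((p - 1) * p ^ e)).sum = p - 1 := by
    rw [← zero_add ((p - 1) * p ^ e), mul_comm,
      digits_sum_add_base_pow_mul hp1 (by positivity), digits_sum_of_lt (x := p - 1) (by omega)]
    simp
  have hnk : (p.digits (n - (p - 1) * p ^ e)).sum = (p.digits n).sum := by
    rw [hsub, digits_sum_add_base_pow_mul hp1 (Nat.mod_lt n (by positivity)),
      digits_sum_sub_base_sub_one hp1 h₀ h₁, ← hy,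
      ← digits_sum_eq_mod_pow_add_div_pow hp1]
  have hval := sub_one_mul_padicValNat_choose_eq_sub_sum_digits (p := p) hkn
  rw [hk, hnk, Nat.add_sub_cancel] at hval
  exact Nat.eq_of_mul_eq_mul_left (by omega) (hval.trans (mul_one _).symm)

theorem stmt_13_general (n q p m : ℕ) (hp : p.Prime)
    (hcong : p % q = 1 % q) (hα : (Nat.digits p n).sum ≤ q)
    (hm : m = (Nat.digits p n).length - 1) (hm1 : 1 ≤ m) :
    padicValNat p (Nat.choose n ((p - 1) * p ^ (m - 1))) = 1 ∧
    q ∣ (p - 1) * p ^ (m - 1) := by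
  have := Fact.mk hp
  have hp1 := hp.one_lt
  have hqd : q ∣ p - 1 := (Nat.modEq_iff_dvd' hp1.le).mp hcong.symm
  have hqp : q ≤ p - 1 := Nat.le_of_dvd (by omega) hqd
  refine ⟨?_, hqd.mul_right _⟩
  obtain ⟨e, rfl⟩ : ∃ e, m = e + 1 := ⟨m - 1, by omega⟩
  have hlt : n < p ^ (e + 2) := (Nat.digits_length_le_iff hp1 n).1 (by omega)
  have hle : p ^ (e + 1) ≤ n :=
    not_lt.1 fun h => by have := (Nat.digits_length_le_iff hp1 n).2 h; omega
  have hlead : n / p ^ (e + 1) % p = n / p ^ (e + 1) :=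
    Nat.mod_eq_of_lt (Nat.div_lt_of_lt_mul (by rwa [← pow_succ]))
  have hlead_pos : 0 < n / p ^ (e + 1) := Nat.div_pos hle (by positivity)
  have := Nat.div_pow_mod_add_div_pow_succ_mod_le_digits_sum hp1 n e
  rw [Nat.add_sub_cancel]
  exact padicValNat_choose_sub_one_mul_pow_eq_one (by omega) (by omega)

theorem stmt_13 (n q p m : ℕ) (hq : 0 < q) (hn : q < n) (hp : p.Prime)
    (hcong : p % q = 1 % q) (hα : (Nat.digits p n).sum ≤ q)
    (hm : m = (Nat.digits p n).length - 1) (hm1 : 1 ≤ m) :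
    padicValNat p (Nat.choose n ((p - 1) * p ^ (m - 1))) = 1 ∧
    q ∣ (p - 1) * p ^ (m - 1) :=
  stmt_13_general n q p m hp hcong hα hm hm1
end
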